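/- Let A = V/Λ be a real torus with an induced involution τ_A coming from a linear involution τ_V preserving Λ. Two fixed points [v], [w] of τ_A lie in the same connected component of the fixed-point set if and only if (v − τ_V v) and (w − τ_V w) differ by an element of (id − τ_V)(Λ) = {λ − τ_V λ : λ ∈ Λ}. Consequently the set of connected components of Fix(τ_A) injects into Λ₋/(id − τ_V)(Λ). -/

import Mathlib

/-!
A point `[v]` of `V ⧸ Λ` is fixed by `τ` iff `v - τ v ∈ Λ`, and then `v - τ v` lies in `Λ₋`
because `τ` is an involution. Changing the representative `v` by `l ∈ Λ` changes `v - τ v` by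
`l - τ l`, so the class of `v - τ v` in `Λ₋ ⧸ (id - τ)(Λ)` is an invariant of the fixed point.
It is locally constant on the fixed-point set, since `v ↦ v - τ v` is continuous and `Λ₋` is
discrete, hence constant on its connected components. Conversely, if the invariants of `[v]` and
`[w]` agree, then `w` can be moved by a lattice vector so that `w - v` is `τ`-invariant, and the
segment from `v` to `w` projects into the fixed-point set.
-/

open Function QuotientAddGroup

theorem connectedComponentIn_eq_iff_connectedComponents_mk_eq {X : Type*} [TopologicalSpace X]
    {F : Set X} {x y : X} (hx : x ∈ F) (hy : y ∈ F) :
    connectedComponentIn F x = connectedComponentIn F y ↔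
      ConnectedComponents.mk (⟨x, hx⟩ : F) = ConnectedComponents.mk ⟨y, hy⟩ := by
  rw [ConnectedComponents.coe_eq_coe, connectedComponentIn_eq_image hx,
    connectedComponentIn_eq_image hy]
  exact (Set.image_injective.mpr Subtype.val_injective).eq_iff

def IsLocallyConstant.connectedComponentsLift {X Y : Type*} [TopologicalSpace X] {f : X → Y}
    (hf : IsLocallyConstant f) : ConnectedComponents X → Y :=
  Quotient.lift f fun _ _ h => hf.apply_eq_of_isPreconnected isPreconnected_connectedComponent
    mem_connectedComponent (h ▸ mem_connectedComponent)

namespace TorusInvolution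

variable {V : Type*} [AddCommGroup V] {Λ : AddSubgroup V} {v w : V}

section Additive

variable (Λ) (τ : V →+ V) in
def minusLattice : AddSubgroup V := Λ ⊓ (τ + .id V).ker

variable (Λ) (τ : V →+ V) in
def coboundaries : AddSubgroup V := Λ.map (.id V - τ)

variable {τ : V →+ V}

theorem mem_minusLattice : v ∈ minusLattice Λ τ ↔ v ∈ Λ ∧ τ v = -v := by
  simp [minusLattice, add_eq_zero_iff_eq_neg]

theorem mem_coboundaries : v ∈ coboundaries Λ τ ↔ ∃ l ∈ Λ, l - τ l = v := by
  simp [coboundaries]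

theorem sub_apply_mem_minusLattice (hτ : Involutive τ) (h : v - τ v ∈ Λ) :
    v - τ v ∈ minusLattice Λ τ :=
  mem_minusLattice.2 ⟨h, by rw [map_sub, hτ, neg_sub]⟩

theorem sub_sub_mem_coboundaries_of_mk_eq (h : (mk v : V ⧸ Λ) = mk w) :
    (v - τ v) - (w - τ w) ∈ coboundaries Λ τ :=
  mem_coboundaries.2 ⟨v - w, QuotientAddGroup.eq_iff_sub_mem.1 h, by rw [map_sub]; abel⟩

variable (hΛ : Λ ≤ Λ.comap τ)

theorem mk_mem_fixedPoints_iff :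
    (mk v : V ⧸ Λ) ∈ fixedPoints (map Λ Λ τ hΛ) ↔ v - τ v ∈ Λ := by
  rw [mem_fixedPoints, IsFixedPt, map_mk, QuotientAddGroup.eq_iff_sub_mem, ← neg_mem_iff, neg_sub]

theorem sub_apply_mem_minusLattice_of_mem_fixedPoints (hτ : Involutive τ)
    (hv : (mk v : V ⧸ Λ) ∈ fixedPoints (map Λ Λ τ hΛ)) : v - τ v ∈ minusLattice Λ τ :=
  sub_apply_mem_minusLattice hτ ((mk_mem_fixedPoints_iff hΛ).1 hv)

noncomputable def fixedPointClass (hτ : Involutive τ) (p : fixedPoints (map Λ Λ τ hΛ)) :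
    minusLattice Λ τ ⧸ (coboundaries Λ τ).addSubgroupOf (minusLattice Λ τ) :=
  mk ⟨p.1.out - τ p.1.out,
    sub_apply_mem_minusLattice_of_mem_fixedPoints hΛ hτ <| by rw [out_eq']; exact p.2⟩

theorem fixedPointClass_mk (hτ : Involutive τ) (hv : (mk v : V ⧸ Λ) ∈ fixedPoints (map Λ Λ τ hΛ))
    (x : minusLattice Λ τ) (hx : (x : V) = v - τ v) :
    fixedPointClass hΛ hτ ⟨mk v, hv⟩ = mk x := by
  rw [fixedPointClass, QuotientAddGroup.eq_iff_sub_mem, AddSubgroup.mem_addSubgroupOf,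
    AddSubgroup.coe_sub, hx]
  exact sub_sub_mem_coboundaries_of_mk_eq (out_eq' _)

theorem fixedPointClass_mk_eq_iff (hτ : Involutive τ)
    (hv : (mk v : V ⧸ Λ) ∈ fixedPoints (map Λ Λ τ hΛ))
    (hw : (mk w : V ⧸ Λ) ∈ fixedPoints (map Λ Λ τ hΛ)) :
    fixedPointClass hΛ hτ ⟨mk v, hv⟩ = fixedPointClass hΛ hτ ⟨mk w, hw⟩ ↔
      (v - τ v) - (w - τ w) ∈ coboundaries Λ τ := by
  rw [fixedPointClass_mk hΛ hτ hv ⟨_, sub_apply_mem_minusLattice_of_mem_fixedPoints hΛ hτ hv⟩ rfl,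
    fixedPointClass_mk hΛ hτ hw ⟨_, sub_apply_mem_minusLattice_of_mem_fixedPoints hΛ hτ hw⟩ rfl,
    QuotientAddGroup.eq_iff_sub_mem, AddSubgroup.mem_addSubgroupOf, AddSubgroup.coe_sub]

theorem isLocallyConstant_fixedPointClass [TopologicalSpace V] [IsTopologicalAddGroup V]
    [DiscreteTopology Λ] (hτc : Continuous τ)
    (hτ : Involutive τ) : IsLocallyConstant (fixedPointClass hΛ hτ) := by
  set F := fixedPoints (map Λ Λ τ hΛ)
  have hq : Topology.IsQuotientMap (F.restrictPreimage (mk : V → V ⧸ Λ)) :=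
    (isOpenQuotientMap_mk.restrictPreimage F).isQuotientMap
  have : DiscreteTopology (minusLattice Λ τ) := .of_subset ‹_› fun _ hx => hx.1
  let g : (mk : V → V ⧸ Λ) ⁻¹' F → minusLattice Λ τ :=
    fun v => ⟨v - τ v, sub_apply_mem_minusLattice_of_mem_fixedPoints hΛ hτ v.2⟩
  have hg : Continuous g := by fun_prop
  have hcomp : fixedPointClass hΛ hτ ∘ F.restrictPreimage mk = mk ∘ g :=
    funext fun v => fixedPointClass_mk hΛ hτ v.2 _ rfl
  intro s
  rw [← hq.isOpen_preimage, ← Set.preimage_comp, hcomp]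
  exact ((IsLocallyConstant.iff_continuous g).2 hg).comp mk s

end Additive

section RealVectorSpace

variable [Module ℝ V] [TopologicalSpace V] [IsTopologicalAddGroup V] [ContinuousSMul ℝ V]
  {τ : V →ₗ[ℝ] V} (hΛ : Λ ≤ Λ.comap τ.toAddMonoidHom)

theorem connectedComponentIn_mk_add_eq
    (hv : (mk v : V ⧸ Λ) ∈ fixedPoints (map Λ Λ τ.toAddMonoidHom hΛ)) {u : V} (hu : τ u = u) :
    connectedComponentIn (fixedPoints (map Λ Λ τ.toAddMonoidHom hΛ)) (mk (v + u)) =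
      connectedComponentIn (fixedPoints (map Λ Λ τ.toAddMonoidHom hΛ)) (mk v) := by
  set F := fixedPoints (map Λ Λ τ.toAddMonoidHom hΛ)
  have hS : IsPreconnected (Set.range fun t : ℝ => (mk (v + t • u) : V ⧸ Λ)) :=
    isPreconnected_range (by fun_prop)
  have hSF : (Set.range fun t : ℝ => (mk (v + t • u) : V ⧸ Λ)) ⊆ F := by
    rintro _ ⟨t, rfl⟩
    rw [mk_mem_fixedPoints_iff]
    simpa [hu] using (mk_mem_fixedPoints_iff hΛ).1 hv
  refine (connectedComponentIn_eq (hS.subset_connectedComponentIn ⟨0, ?_⟩ hSF ⟨1, ?_⟩)).symm <;>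
    simp

theorem connectedComponentIn_mk_eq_of_sub_sub_mem_coboundaries
    (hv : (mk v : V ⧸ Λ) ∈ fixedPoints (map Λ Λ τ.toAddMonoidHom hΛ))
    (h : (v - τ v) - (w - τ w) ∈ coboundaries Λ τ.toAddMonoidHom) :
    connectedComponentIn (fixedPoints (map Λ Λ τ.toAddMonoidHom hΛ)) (mk v) =
      connectedComponentIn (fixedPoints (map Λ Λ τ.toAddMonoidHom hΛ)) (mk w) := by
  obtain ⟨l, hl, hlvw⟩ := mem_coboundaries.1 h
  have hτl : τ l = l - ((v - τ v) - (w - τ w)) := by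
    rw [← hlvw]
    exact (sub_sub_cancel _ _).symm
  have hu : τ (w + l - v) = w + l - v := by
    rw [map_sub, map_add, hτl]
    abel
  have hvu : (mk (v + (w + l - v)) : V ⧸ Λ) = mk w := by
    rw [add_sub_cancel, QuotientAddGroup.eq_iff_sub_mem, add_sub_cancel_left]
    exact hl
  rw [← connectedComponentIn_mk_add_eq hΛ hv hu, hvu]

variable [DiscreteTopology Λ]

theorem connectedComponentIn_mk_eq_iff (hτc : Continuous τ) (hτ : Involutive τ)
    (hv : (mk v : V ⧸ Λ) ∈ fixedPoints (map Λ Λ τ.toAddMonoidHom hΛ))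
    (hw : (mk w : V ⧸ Λ) ∈ fixedPoints (map Λ Λ τ.toAddMonoidHom hΛ)) :
    connectedComponentIn (fixedPoints (map Λ Λ τ.toAddMonoidHom hΛ)) (mk v) =
        connectedComponentIn (fixedPoints (map Λ Λ τ.toAddMonoidHom hΛ)) (mk w) ↔
      (v - τ v) - (w - τ w) ∈ coboundaries Λ τ.toAddMonoidHom := by
  refine ⟨fun h => ?_, connectedComponentIn_mk_eq_of_sub_sub_mem_coboundaries hΛ hv⟩
  rw [connectedComponentIn_eq_iff_connectedComponents_mk_eq hv hw] at h
  exact (fixedPointClass_mk_eq_iff hΛ hτ hv hw).1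
    (congrArg (isLocallyConstant_fixedPointClass hΛ hτc hτ).connectedComponentsLift h)

theorem injective_connectedComponentsLift_fixedPointClass (hτc : Continuous τ)
    (hτ : Involutive τ) :
    Injective (isLocallyConstant_fixedPointClass hΛ hτc hτ).connectedComponentsLift := by
  rintro ⟨x, hx⟩ ⟨y, hy⟩ h
  obtain ⟨v, rfl⟩ := mk_surjective x
  obtain ⟨w, rfl⟩ := mk_surjective y
  exact (connectedComponentIn_eq_iff_connectedComponents_mk_eq hx hy).1 <|
    (connectedComponentIn_mk_eq_iff hΛ hτc hτ hx hy).2 <|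
      (fixedPointClass_mk_eq_iff hΛ hτ hx hy).1 h

end RealVectorSpace

end TorusInvolution

open TorusInvolution

theorem stmt_14_general (V : Type*) [NormedAddCommGroup V] [NormedSpace ℝ V]
    [FiniteDimensional ℝ V]
    (Λ : AddSubgroup V)
    (hdisc : DiscreteTopology Λ)
    (τ : V →ₗ[ℝ] V) (hτ : τ ∘ₗ τ = LinearMap.id)
    (hΛ : Λ ≤ Λ.comap τ.toAddMonoidHom)
    (Λm : AddSubgroup V) (hΛm : ∀ x : V, x ∈ Λm ↔ (x ∈ Λ ∧ τ x = -x))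
    (N : AddSubgroup V) (hN : ∀ x : V, x ∈ N ↔ ∃ l ∈ Λ, x = l - τ l)
    (F : Set (V ⧸ Λ))
    (hF : F = {p | QuotientAddGroup.map Λ Λ τ.toAddMonoidHom hΛ p = p}) :
    (∀ v w : V,
      (QuotientAddGroup.mk v : V ⧸ Λ) ∈ F → (QuotientAddGroup.mk w : V ⧸ Λ) ∈ F →
      (connectedComponentIn F (QuotientAddGroup.mk v) =
          connectedComponentIn F (QuotientAddGroup.mk w) ↔
        (v - τ v) - (w - τ w) ∈ N)) ∧
    ∃ ψ : ConnectedComponents F → Λm ⧸ N.addSubgroupOf Λm,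
      Function.Injective ψ ∧
      ∀ (v : V) (hv : (QuotientAddGroup.mk v : V ⧸ Λ) ∈ F)
        (x : Λm) (_ : (x : V) = v - τ v),
        ψ (ConnectedComponents.mk ⟨QuotientAddGroup.mk v, hv⟩) =
          QuotientAddGroup.mk x := by
  obtain rfl : F = fixedPoints (map Λ Λ τ.toAddMonoidHom hΛ) := hF
  obtain rfl : Λm = minusLattice Λ τ.toAddMonoidHom :=
    AddSubgroup.ext fun x => (hΛm x).trans (mem_minusLattice (τ := τ.toAddMonoidHom)).symm
  obtain rfl : N = coboundaries Λ τ.toAddMonoidHom :=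
    AddSubgroup.ext fun x => (hN x).trans <| by simp [mem_coboundaries, eq_comm]
  have hτc : Continuous τ := τ.continuous_of_finiteDimensional
  have hτ : Involutive τ := LinearMap.congr_fun hτ
  exact ⟨fun v w hv hw => connectedComponentIn_mk_eq_iff hΛ hτc hτ hv hw,
    _, injective_connectedComponentsLift_fixedPointClass hΛ hτc hτ,
    fun v hv x hx => fixedPointClass_mk hΛ hτ hv x hx⟩

/-- For a real torus `A = V/Λ` with involution `τ_A` induced by a linear involution
`τ` preserving the full lattice `Λ`: two fixed points `[v]`, `[w]` of `τ_A` lie in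
the same connected component of the fixed-point set iff `(v - τv) - (w - τw)`
lies in `(id - τ)(Λ)`; consequently the set of connected components of
`Fix(τ_A)` injects into `Λ₋/(id - τ)(Λ)` via `[v] ↦ [v - τ v]`. -/
theorem stmt_14 (V : Type*) [NormedAddCommGroup V] [NormedSpace ℝ V]
    [FiniteDimensional ℝ V]
    (Λ : AddSubgroup V) (hfull : Submodule.span ℝ (Λ : Set V) = ⊤)
    (hdisc : DiscreteTopology Λ)
    (τ : V →ₗ[ℝ] V) (hτ : τ ∘ₗ τ = LinearMap.id)
    (hΛ : Λ ≤ Λ.comap τ.toAddMonoidHom)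
    (Λm : AddSubgroup V) (hΛm : ∀ x : V, x ∈ Λm ↔ (x ∈ Λ ∧ τ x = -x))
    (N : AddSubgroup V) (hN : ∀ x : V, x ∈ N ↔ ∃ l ∈ Λ, x = l - τ l)
    (F : Set (V ⧸ Λ))
    (hF : F = {p | QuotientAddGroup.map Λ Λ τ.toAddMonoidHom hΛ p = p}) :
    (∀ v w : V,
      (QuotientAddGroup.mk v : V ⧸ Λ) ∈ F → (QuotientAddGroup.mk w : V ⧸ Λ) ∈ F →
      (connectedComponentIn F (QuotientAddGroup.mk v) =
          connectedComponentIn F (QuotientAddGroup.mk w) ↔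
        (v - τ v) - (w - τ w) ∈ N)) ∧
    ∃ ψ : ConnectedComponents F → Λm ⧸ N.addSubgroupOf Λm,
      Function.Injective ψ ∧
      ∀ (v : V) (hv : (QuotientAddGroup.mk v : V ⧸ Λ) ∈ F)
        (x : Λm) (_ : (x : V) = v - τ v),
        ψ (ConnectedComponents.mk ⟨QuotientAddGroup.mk v, hv⟩) =
          QuotientAddGroup.mk x :=
  stmt_14_general V Λ hdisc τ hτ hΛ Λm hΛm N hN F hF
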